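/- For every integer p ≥ 1, the function g_p(x) := coth(px)/sinh(2x) − 1/(2p·sinh²(x)) tends to (p² − 1)/(6p) as x tends to 0 from the right. -/

import Mathlib

open Real Filter Topology

/-- The elliptic fixed-point integrand `g_p(x) = coth(px)/sinh(2x) - 1/(2p sinh²x)`. -/
noncomputable def ellipticIntegrand (p : ℕ) (x : ℝ) : ℝ :=
  Real.cosh (p * x) / Real.sinh (p * x) / Real.sinh (2 * x) -
    1 / (2 * p * Real.sinh x ^ 2)

/-!
Over a common denominator, and after expanding `sinh ((p ± 1) x)` by the addition formula,
`g_p(x) = N(x) / (4 p sinh(px) sinh²x cosh x)` with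
`N(x) = (p - 1) (sinh ((p + 1) x) - (p + 1) x) - (p + 1) (sinh ((p - 1) x) - (p - 1) x)`,
the linear terms having cancelled. Dividing by `x³` and using `sinh (a x) / x → a` and
`(sinh (a x) - a x) / x³ → a³ / 6` gives the limit.
-/

lemma tendsto_sinh_mul_div_self (a : ℝ) :
    Tendsto (fun x => sinh (a * x) / x) (𝓝[≠] 0) (𝓝 a) := by
  have h : HasDerivAt (fun x => sinh (a * x)) a 0 := by
    simpa using ((hasDerivAt_id (0 : ℝ)).const_mul a).sinh
  simpa [div_eq_inv_mul] using h.tendsto_slope_zero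

lemma tendsto_sinh_mul_sub_mul_div_pow_three (a : ℝ) :
    Tendsto (fun x => (sinh (a * x) - a * x) / x ^ 3) (𝓝[≠] 0) (𝓝 (a ^ 3 / 6)) := by
  have hzero {f : ℝ → ℝ} (hf : Continuous f) (h0 : f 0 = 0) :
      Tendsto f (𝓝[≠] 0) (𝓝 0) :=
    (hf.tendsto' 0 0 h0).mono_left nhdsWithin_le_nhds
  refine HasDerivAt.lhopital_zero_nhdsNE (f' := fun x => a * cosh (a * x) - a)
    (g' := fun x => 3 * x ^ 2) ?_ ?_ ?_ (hzero (by fun_prop) (by simp))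
    (hzero (by fun_prop) (by simp)) ?_
  · refine .of_forall fun x => ?_
    have hlin := (hasDerivAt_id' x).const_mul a
    exact (hlin.sinh.fun_sub hlin).congr_deriv (by ring)
  · refine .of_forall fun x => ?_
    simpa using (hasDerivAt_pow 3 x)
  · filter_upwards [self_mem_nhdsWithin] with x hx
    simpa using hx
  · -- `cosh (2y) - 1 = 2 sinh² y` reduces this to the first-order limit at `a / 2`
    have h := ((tendsto_sinh_mul_div_self (a / 2)).pow 2).const_mul (2 * a / 3)
    refine (h.congr' ?_).trans (le_of_eq (congrArg 𝓝 (by ring)))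
    filter_upwards [self_mem_nhdsWithin] with x hx
    have hx : x ≠ 0 := hx
    rw [show a * x = 2 * (a / 2 * x) by ring, cosh_two_mul, cosh_sq]
    field_simp
    ring

lemma coth_div_sinh_two_mul_sub_eq {q x : ℝ} (hq : q ≠ 0) (hx : x ≠ 0) :
    cosh (q * x) / sinh (q * x) / sinh (2 * x) - 1 / (2 * q * sinh x ^ 2) =
      ((q - 1) * (sinh ((q + 1) * x) - (q + 1) * x) -
          (q + 1) * (sinh ((q - 1) * x) - (q - 1) * x)) /
        (4 * q * sinh (q * x) * sinh x ^ 2 * cosh x) := by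
  have hsqx : sinh (q * x) ≠ 0 := sinh_ne_zero.2 (mul_ne_zero hq hx)
  have hsx : sinh x ≠ 0 := sinh_ne_zero.2 hx
  have hcx : cosh x ≠ 0 := (cosh_pos x).ne'
  have hsinh_add : sinh ((q + 1) * x) = sinh (q * x) * cosh x + cosh (q * x) * sinh x := by
    rw [add_mul, one_mul, sinh_add]
  have hsinh_sub : sinh ((q - 1) * x) = sinh (q * x) * cosh x - cosh (q * x) * sinh x := by
    rw [sub_mul, one_mul, sinh_sub]
  rw [hsinh_add, hsinh_sub, sinh_two_mul]
  field_simp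
  ring

lemma tendsto_coth_div_sinh_two_mul_sub {q : ℝ} (hq : q ≠ 0) :
    Tendsto (fun x => cosh (q * x) / sinh (q * x) / sinh (2 * x) - 1 / (2 * q * sinh x ^ 2))
      (𝓝[≠] 0) (𝓝 ((q ^ 2 - 1) / (6 * q))) := by
  have hsinh : Tendsto (fun x => sinh x / x) (𝓝[≠] 0) (𝓝 1) := by
    simpa using tendsto_sinh_mul_div_self 1
  have hcosh : Tendsto cosh (𝓝[≠] 0) (𝓝 1) :=
    (continuous_cosh.tendsto' 0 1 cosh_zero).mono_left nhdsWithin_le_nhds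
  have hnum := ((tendsto_sinh_mul_sub_mul_div_pow_three (q + 1)).const_mul (q - 1)).sub
    ((tendsto_sinh_mul_sub_mul_div_pow_three (q - 1)).const_mul (q + 1))
  have hden := (((tendsto_sinh_mul_div_self q).const_mul (4 * q)).mul (hsinh.pow 2)).mul hcosh
  have hlim := hnum.div hden (by simp [hq])
  refine (hlim.congr' ?_).trans (le_of_eq (congrArg 𝓝 ?_))
  · filter_upwards [self_mem_nhdsWithin] with x hx
    have hx : x ≠ 0 := hx
    rw [Pi.div_apply, coth_div_sinh_two_mul_sub_eq hq hx]
    field_simp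
  · field_simp
    ring

theorem elliptic_integrand_limit_at_zero (p : ℕ) (hp : 1 ≤ p) :
    Filter.Tendsto (fun x : ℝ => ellipticIntegrand p x) (nhdsWithin 0 (Set.Ioi 0))
      (nhds (((p : ℝ) ^ 2 - 1) / (6 * p))) :=
  (tendsto_coth_div_sinh_two_mul_sub (Nat.cast_ne_zero.2 (Nat.pos_iff_ne_zero.1 hp))).mono_left
    (nhdsGT_le_nhdsNE 0)
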